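/- arXiv:2510.11466 — 2 statements merged into one kernel-verified Lean document; each statement's English description precedes it below -/
import Mathlib

section
/- Let L be a free abelian group of finite rank and (α_i)_{i∈I} a finite ℤ-linearly independent family in L. Define μ ≤ λ for μ, λ ∈ L if λ − μ ∈ Σ_i ℕ·α_i. Then for any μ ≤ λ, the interval {ν ∈ L : μ ≤ ν ≤ λ} is finite. -/
/-!
By linear independence, the ℕ-coefficients of an element of the cone are unique. If
`λ - μ = ∑ dᵢ αᵢ`, `ν - μ = ∑ cᵢ αᵢ` and `λ - ν = ∑ c'ᵢ αᵢ`, then `c + c' = d`, so `c ≤ d`: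
every `ν` in the interval is `μ + ∑ cᵢ αᵢ` for `c` in the finite box `Iic d`.
-/

section NatCone

variable {R L I : Type*} [Ring R] [CharZero R] [AddCommGroup L] [Module R L] [Fintype I]
  {α : I → L}

theorem LinearIndependent.natCast_sum_smul_injective (hα : LinearIndependent R α) :
    Function.Injective fun c : I → ℕ => ∑ i, (c i : R) • α i :=
  hα.fintypeLinearCombination_injective.comp fun _ _ h => funext fun i => by
    exact_mod_cast congrFun h i

theorem LinearIndependent.le_of_natCast_sum_smul_add_eq (hα : LinearIndependent R α)
    {c c' d : I → ℕ}
    (h : ∑ i, (c i : R) • α i + ∑ i, (c' i : R) • α i = ∑ i, (d i : R) • α i) : c ≤ d := by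
  have hsum : c + c' = d := hα.natCast_sum_smul_injective <| by
    simpa only [Pi.add_apply, Nat.cast_add, add_smul, Finset.sum_add_distrib] using h
  exact hsum ▸ le_self_add

end NatCone

theorem statement6_general (L : Type) [AddCommGroup L]
    (I : Type) [Fintype I] (α : I → L) (hα : LinearIndependent ℤ α)
    (μ lam : L) (hle : ∃ c : I → ℕ, lam - μ = ∑ i, (c i : ℤ) • α i) :
    {ν : L | (∃ c : I → ℕ, ν - μ = ∑ i, (c i : ℤ) • α i) ∧
        (∃ c : I → ℕ, lam - ν = ∑ i, (c i : ℤ) • α i)}.Finite := by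
  classical
  obtain ⟨d, hd⟩ := hle
  refine ((Set.finite_Iic d).image fun c : I → ℕ => μ + ∑ i, (c i : ℤ) • α i).subset ?_
  rintro ν ⟨⟨c, hc⟩, c', hc'⟩
  refine ⟨c, hα.le_of_natCast_sum_smul_add_eq (c' := c') ?_, ?_⟩
  · rw [← hc, ← hc', ← hd]
    abel
  · rw [← add_sub_cancel μ ν, hc]

theorem statement6 (L : Type) [AddCommGroup L] [Module.Free ℤ L] [Module.Finite ℤ L]
    (I : Type) [Fintype I] (α : I → L) (hα : LinearIndependent ℤ α)
    (μ lam : L) (hle : ∃ c : I → ℕ, lam - μ = ∑ i, (c i : ℤ) • α i) :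
    {ν : L | (∃ c : I → ℕ, ν - μ = ∑ i, (c i : ℤ) • α i) ∧
        (∃ c : I → ℕ, lam - ν = ∑ i, (c i : ℤ) • α i)}.Finite :=
  statement6_general L I α hα μ lam hle
end

section
/- Let S be a scheme, Y an S-scheme, D ⊆ Y a closed subscheme whose open complement Y ∖ D maps isomorphically to S (so Y is a 'pointy' S-scheme). Let W be an S-scheme and W∘ ⊆ W an open subscheme. Then there is a natural bijection between: (i) S-morphisms σ∘: W∘ → Y such that (σ∘)⁻¹(D) is closed in W, and (ii) S-morphisms σ: W → Y such that σ⁻¹(D) ⊆ W∘; given by restriction σ ↦ σ|_{W∘}. -/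
/-!
Away from `D` the scheme `Y` is just `S`, so two `S`-morphisms that both land in `Y ∖ D` are equal.
Hence `σ∘` extends to `W` by gluing it with `W → S ≅ Y ∖ D` on the open complement of the closed
set `σ∘⁻¹(D)`: on the overlap both pieces land in `Y ∖ D`. Two extensions agree on `W∘` and near
every point where both avoid `D`, and these open sets cover `W` because `σ⁻¹(D) ⊆ W∘`.
-/

open AlgebraicGeometry CategoryTheory Limits

namespace AlgebraicGeometry.Scheme

lemma exists_comp_eq_of_sup_eq_top {X Y : Scheme} {U₁ U₂ : X.Opens} (hU : U₁ ⊔ U₂ = ⊤)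
    (f₁ : U₁.toScheme ⟶ Y) (f₂ : U₂.toScheme ⟶ Y)
    (h : pullback.fst U₁.ι U₂.ι ≫ f₁ = pullback.snd U₁.ι U₂.ι ≫ f₂) :
    ∃ f : X ⟶ Y, U₁.ι ≫ f = f₁ ∧ U₂.ι ≫ f = f₂ := by
  let 𝒰 := X.openCoverOfIsOpenCover (fun b : Bool ↦ cond b U₁ U₂) <| by
    rwa [TopologicalSpace.IsOpenCover, iSup_bool_eq]
  let f : ∀ b : Bool, (cond b U₁ U₂).toScheme ⟶ Y := fun b ↦ Bool.rec f₂ f₁ b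
  have hf : ∀ b b', pullback.fst (𝒰.f b) (𝒰.f b') ≫ f b = pullback.snd _ _ ≫ f b' := by
    rintro (_ | _) (_ | _)
    · exact congrArg (· ≫ f₂) (fst_eq_snd_of_mono_eq U₂.ι)
    · exact (by simpa using (pullbackSymmetry U₂.ι U₁.ι).hom ≫= h.symm :
        pullback.fst U₂.ι U₁.ι ≫ f₂ = pullback.snd U₂.ι U₁.ι ≫ f₁)
    · exact h
    · exact congrArg (· ≫ f₁) (fst_eq_snd_of_mono_eq U₁.ι)
  exact ⟨𝒰.glueMorphisms f hf, 𝒰.ι_glueMorphisms f hf true, 𝒰.ι_glueMorphisms f hf false⟩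

lemma Opens.image_ι_preimage_comp {X Y : Scheme} (U : X.Opens) (f : X ⟶ Y) (T : Set Y) :
    U.ι '' ((U.ι ≫ f) ⁻¹' T) = f ⁻¹' T ∩ U := by
  rw [Hom.comp_base, TopCat.coe_comp, Set.preimage_comp, Set.image_preimage_eq_inter_range,
    Opens.range_ι]

end AlgebraicGeometry.Scheme

section PointedOverS

variable {S Y : Scheme} {q : Y ⟶ S} {V : Y.Opens}

lemma eq_of_comp_eq_of_forall_mem [Mono (V.ι ≫ q)] {Z : Scheme} {τ τ' : Z ⟶ Y}
    (hτ : ∀ z, τ z ∈ V) (hτ' : ∀ z, τ' z ∈ V) (h : τ ≫ q = τ' ≫ q) : τ = τ' := by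
  have hτ : Set.range τ ⊆ Set.range V.ι := V.range_ι ▸ Set.range_subset_iff.mpr hτ
  have hτ' : Set.range τ' ⊆ Set.range V.ι := V.range_ι ▸ Set.range_subset_iff.mpr hτ'
  rw [← IsOpenImmersion.lift_fac V.ι τ hτ, ← IsOpenImmersion.lift_fac V.ι τ' hτ']
  congr 1
  rw [← cancel_mono (V.ι ≫ q)]
  simpa only [IsOpenImmersion.lift_fac_assoc] using h

lemma eq_of_ι_comp_eq [Mono (V.ι ≫ q)] {W : Scheme} {U : W.Opens} {σ σ' : W ⟶ Y}
    (hq : σ ≫ q = σ' ≫ q) (hσ : σ ⁻¹' (V : Set Y)ᶜ ⊆ U) (hσ' : σ' ⁻¹' (V : Set Y)ᶜ ⊆ U)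
    (hU : U.ι ≫ σ = U.ι ≫ σ') : σ = σ' := by
  refine Scheme.hom_ext_of_forall _ _ fun w ↦ ?_
  by_cases hw : w ∈ U
  · exact ⟨U, hw, hU⟩
  refine ⟨σ ⁻¹ᵁ V ⊓ σ' ⁻¹ᵁ V, ⟨not_not.mp (hw <| hσ ·), not_not.mp (hw <| hσ' ·)⟩, ?_⟩
  refine eq_of_comp_eq_of_forall_mem (q := q) (fun z ↦ z.2.1) (fun z ↦ z.2.2) ?_
  simp only [Category.assoc, hq]

lemma exists_ι_comp_eq_of_isClosed [IsIso (V.ι ≫ q)] {W : Scheme} {qW : W ⟶ S} {U : W.Opens}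
    (σ₀ : U.toScheme ⟶ Y) (hσ₀ : σ₀ ≫ q = U.ι ≫ qW)
    (hC : IsClosed (U.ι '' (σ₀ ⁻¹' (V : Set Y)ᶜ))) :
    ∃ σ : W ⟶ Y, (σ ≫ q = qW ∧ σ ⁻¹' (V : Set Y)ᶜ ⊆ U) ∧ U.ι ≫ σ = σ₀ := by
  set C := U.ι '' (σ₀ ⁻¹' (V : Set Y)ᶜ)
  let U' : W.Opens := ⟨Cᶜ, hC.isOpen_compl⟩
  have hCU : C ⊆ U := Set.image_subset_iff.mpr fun u _ ↦ u.2
  have hcover : U ⊔ U' = ⊤ := eq_top_iff.mpr fun w _ ↦ (em (w ∈ U)).imp id (mt (hCU ·))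
  let e : S ⟶ Y := inv (V.ι ≫ q) ≫ V.ι
  have he : e ≫ q = 𝟙 S := by simp [e]
  have he_mem : ∀ s, e s ∈ V := fun s ↦ (inv (V.ι ≫ q) s).2
  obtain ⟨σ, hσU, hσU'⟩ := Scheme.exists_comp_eq_of_sup_eq_top hcover σ₀ (U'.ι ≫ qW ≫ e) <| by
    refine eq_of_comp_eq_of_forall_mem (q := q) (fun p ↦ ?_) (fun p ↦ he_mem _) ?_
    · by_contra hp
      refine (pullback.snd U.ι U'.ι p).2 (?_ : U'.ι (pullback.snd U.ι U'.ι p) ∈ C)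
      rw [← Scheme.Hom.comp_apply, ← pullback.condition]
      exact ⟨_, hp, rfl⟩
    · simp [hσ₀, he, pullback.condition_assoc]
  refine ⟨σ, ⟨?_, fun w hw ↦ by_contra fun hwU ↦ ?_⟩, hσU⟩
  · refine Scheme.hom_ext_of_forall _ _ fun w ↦ ?_
    by_cases hw : w ∈ U
    · exact ⟨U, hw, by rw [reassoc_of% hσU, hσ₀]⟩
    · exact ⟨U', mt (hCU ·) hw, by simp [reassoc_of% hσU', he]⟩
  · obtain ⟨p, rfl⟩ : w ∈ Set.range U'.ι := U'.range_ι ▸ mt (hCU ·) hwU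
    rw [Set.mem_preimage, ← Scheme.Hom.comp_apply, hσU'] at hw
    exact hw (he_mem _)

end PointedOverS

theorem statement18 (S Y W : Scheme) (qY : Y ⟶ S) (qW : W ⟶ S)
    (D : Set Y) (hD : IsClosed D)
    (V : Y.Opens) (hV : (V : Set Y) = Dᶜ) (hiso : IsIso (V.ι ≫ qY))
    (U : W.Opens) :
    (∀ σ : W ⟶ Y, σ ≫ qY = qW → σ.base ⁻¹' D ⊆ (U : Set W) →
      (U.ι ≫ σ) ≫ qY = U.ι ≫ qW ∧
        IsClosed (U.ι.base '' ((U.ι ≫ σ).base ⁻¹' D))) ∧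
    (∀ σ₀ : U.toScheme ⟶ Y, σ₀ ≫ qY = U.ι ≫ qW →
      IsClosed (U.ι.base '' (σ₀.base ⁻¹' D)) →
      ∃! σ : W ⟶ Y, (σ ≫ qY = qW ∧ σ.base ⁻¹' D ⊆ (U : Set W)) ∧ U.ι ≫ σ = σ₀) := by
  obtain rfl : D = (V : Set Y)ᶜ := by rw [hV, compl_compl]
  refine ⟨fun σ hσ hσU ↦ ⟨by rw [Category.assoc, hσ], ?_⟩, fun σ₀ hσ₀ hC ↦ ?_⟩
  · rw [Scheme.Opens.image_ι_preimage_comp, Set.inter_eq_left.mpr hσU]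
    exact hD.preimage σ.continuous
  · obtain ⟨σ, ⟨hσ, hσU⟩, hσ₀'⟩ := exists_ι_comp_eq_of_isClosed σ₀ hσ₀ hC
    refine ⟨σ, ⟨⟨hσ, hσU⟩, hσ₀'⟩, fun σ' ⟨⟨hσ', hσ'U⟩, hσ'₀⟩ ↦ ?_⟩
    exact eq_of_ι_comp_eq (hσ'.trans hσ.symm) hσ'U hσU (hσ'₀.trans hσ₀'.symm)
end
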